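/- arXiv:2303.07949 — 2 statements merged into one kernel-verified Lean document; each statement's English description precedes it below -/
import Mathlib

section
/- Let A ∈ S(C_n) be a real symmetric matrix whose off-diagonal nonzero pattern is the n-cycle, and suppose λ is an eigenvalue of A with multiplicity 2. Then there exists a nowhere-zero eigenvector of A with eigenvalue λ (an eigenvector with no zero entry). -/
open Matrix

variable {V : Type*} [Fintype V] [DecidableEq V]

/-- The multiplicity of `t` as an eigenvalue of the matrix `A`. -/
noncomputable def eigMult (A : Matrix V V ℝ) (t : ℝ) : ℕ :=
  Module.finrank ℝ (LinearMap.ker (Matrix.toLin' (A - t • (1 : Matrix V V ℝ))))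

/-- `S(G)`: real symmetric matrices whose off-diagonal support is the edge set of `G`. -/
def matrixSet (G : SimpleGraph V) : Set (Matrix V V ℝ) :=
  {A | A.IsSymm ∧ ∀ i j : V, i ≠ j → (A i j ≠ 0 ↔ G.Adj i j)}

/-- The cycle `C_n` on `n` vertices. -/
def cycleG (n : ℕ) : SimpleGraph (Fin n) :=
  SimpleGraph.fromRel (fun i j => (i.val + 1) % n = j.val)

/-- If `A ∈ S(C_n)` and `t` is an eigenvalue of `A` of multiplicity `2`, then `A` has a
nowhere-zero eigenvector for the eigenvalue `t`. -/
theorem stmt13 {n : ℕ} (hn : 3 ≤ n)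
    (A : Matrix (Fin n) (Fin n) ℝ) (hA : A ∈ matrixSet (cycleG n))
    (t : ℝ) (ht : eigMult A t = 2) :
    ∃ x : Fin n → ℝ, A.mulVec x = t • x ∧ ∀ i, x i ≠ 0 := by
  haveI : NeZero n := ⟨by omega⟩
  obtain ⟨hsymm, hsupp⟩ := hA
  -- basic `Fin` arithmetic
  have hv : ∀ j : Fin n, (j + 1).val = (j.val + 1) % n := by
    intro j
    rw [Fin.val_add, Fin.val_one', Nat.mod_eq_of_lt (show 1 < n by omega)]
  have hne1 : ∀ j : Fin n, j ≠ j + 1 := by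
    intro j h
    apply_fun Fin.val at h
    rw [hv] at h
    have hlt := j.isLt
    rcases Nat.lt_or_ge (j.val + 1) n with h' | h'
    · rw [Nat.mod_eq_of_lt h'] at h; omega
    · have h'' : j.val + 1 = n := by omega
      rw [h'', Nat.mod_self] at h; omega
  -- nonzero cyclic entries
  have hAnz : ∀ j : Fin n, A j (j + 1) ≠ 0 := by
    intro j
    refine (hsupp j (j + 1) (hne1 j)).mpr ?_
    exact ⟨hne1 j, Or.inl (hv j).symm⟩
  -- zero entries away from the cycle
  have hz : ∀ j k : Fin n, k ≠ j → k ≠ j + 1 → j ≠ k + 1 → A j k = 0 := by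
    intro j k h1 h2 h3
    by_contra h
    obtain ⟨-, hadj⟩ := (hsupp j k (fun e => h1 e.symm)).mp h
    rcases hadj with h' | h'
    · exact h2 (Fin.ext (by rw [hv]; exact h'.symm))
    · exact h3 (Fin.ext (by rw [hv]; exact h'.symm))
  -- the three-term recurrence forces propagation of zeros
  have hrec : ∀ (x : Fin n → ℝ), A.mulVec x = t • x →
      ∀ j, x j = 0 → x (j + 1) = 0 → x (j + 1 + 1) = 0 := by
    intro x hx j h0 h1
    have he := congrFun hx (j + 1)
    simp only [Matrix.mulVec, dotProduct, Pi.smul_apply, smul_eq_mul] at he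
    rw [Finset.sum_eq_single (j + 1 + 1)] at he
    · rw [h1, mul_zero] at he
      rcases mul_eq_zero.mp he with h | h
      · exact absurd h (hAnz (j + 1))
      · exact h
    · intro b _ hb
      by_cases hbj : b = j
      · rw [hbj, h0, mul_zero]
      by_cases hbj1 : b = j + 1
      · rw [hbj1, h1, mul_zero]
      · rw [hz (j + 1) b (Ne.symm (fun e => hbj1 e.symm)) hb
          (fun e => hbj (by exact add_right_cancel e.symm)), zero_mul]
    · intro h
      exact absurd (Finset.mem_univ _) h
  -- a kernel vector vanishing at two consecutive vertices is zero
  have hvanish : ∀ (x : Fin n → ℝ), A.mulVec x = t • x →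
      ∀ i, x i = 0 → x (i + 1) = 0 → x = 0 := by
    intro x hx i h0 h1
    open Fin.NatCast in
    have H : ∀ m : ℕ, x (i + (m : Fin n)) = 0 ∧ x (i + (m : Fin n) + 1) = 0 := by
      intro m
      induction m with
      | zero => simpa using ⟨h0, h1⟩
      | succ m ih =>
        have hc : ((m + 1 : ℕ) : Fin n) = (m : Fin n) + 1 := by push_cast; ring
        constructor
        · rw [hc, ← add_assoc]; exact ih.2
        · rw [hc, ← add_assoc]
          exact hrec x hx (i + (m : Fin n)) ih.1 ih.2
    funext k
    have := (H ((k - i).val)).1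
    rwa [Fin.cast_val_eq_self, show i + (k - i) = k by abel] at this
  -- the kernel
  set W := LinearMap.ker (Matrix.toLin' (A - t • (1 : Matrix (Fin n) (Fin n) ℝ))) with hW
  have htW : Module.finrank ℝ W = 2 := ht
  have memW : ∀ x : Fin n → ℝ, x ∈ W ↔ A.mulVec x = t • x := by
    intro x
    rw [hW, LinearMap.mem_ker, Matrix.toLin'_apply, Matrix.sub_mulVec,
      Matrix.smul_mulVec, Matrix.one_mulVec, sub_eq_zero]
  -- evaluation functionals
  set f : Fin n → (W →ₗ[ℝ] ℝ) := fun i => (LinearMap.proj i).comp W.subtype with hfdef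
  have hfapp : ∀ i (x : W), f i x = (x : Fin n → ℝ) i := fun _ _ => rfl
  have hf : ∀ i, f i ≠ 0 := by
    intro i h0
    have hinj : Function.Injective (f (i + 1)) := by
      rw [← LinearMap.ker_eq_bot, eq_bot_iff]
      intro x hx
      have hxi : (x : Fin n → ℝ) i = 0 := by
        have := LinearMap.ext_iff.mp h0 x
        simpa [hfapp] using this
      have hxi1 : (x : Fin n → ℝ) (i + 1) = 0 := by
        simpa [hfapp] using hx
      have : (x : Fin n → ℝ) = 0 := hvanish _ ((memW _).mp x.2) i hxi hxi1
      simpa [Submodule.mem_bot] using Subtype.ext this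
    have hle := LinearMap.finrank_le_finrank_of_injective hinj
    rw [htW, Module.finrank_self] at hle
    omega
  -- a basis of the 2-dimensional kernel
  let b := Module.finBasisOfFinrankEq ℝ W htW
  set u := b 0 with hu
  set v := b 1 with hvv
  have hne0 : ∀ i, f i u ≠ 0 ∨ f i v ≠ 0 := by
    intro i
    by_contra h
    push_neg at h
    apply hf i
    apply b.ext
    intro j
    fin_cases j
    · simpa using h.1
    · simpa using h.2
  -- choose a generic coefficient
  obtain ⟨c, hc⟩ := Infinite.exists_notMem_finset
    (Finset.image (fun i : Fin n => -(f i u) / (f i v)) Finset.univ)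
  set w : W := u + c • v with hwdef
  refine ⟨(w : Fin n → ℝ), (memW _).mp w.2, ?_⟩
  intro i
  have hwi : (w : Fin n → ℝ) i = f i u + c * (f i v) := by
    rw [← hfapp i w, hwdef, map_add, _root_.map_smul, smul_eq_mul]
  rw [hwi]
  rcases eq_or_ne (f i v) 0 with hv0 | hv0
  · rw [hv0, mul_zero, add_zero]
    rcases hne0 i with h | h
    · exact h
    · exact absurd hv0 h
  · intro hzero
    apply hc
    refine Finset.mem_image.mpr ⟨i, Finset.mem_univ i, ?_⟩
    field_simp
    linarith
end

section
/- Let G be a non-empty graph on n vertices and suppose A ∈ S(G) has a nowhere-zero eigenvector x (no zero entries) with eigenvalue λ, where λ is neither the smallest nor the largest eigenvalue of A. Then there exists a 1-bordering A' of A lying in S(K_1 ∨ G) with q(A') = q(A); moreover if λ is additionally a simple eigenvalue, there exists such an A' with q(A') = q(A) − 1. -/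
open Matrix

variable {V : Type*} [Fintype V] [DecidableEq V]

/-- eigenvalues of `A` admitting a nonzero eigenvector orthogonal to `x`. -/
def eigS {n : ℕ} (A : Matrix (Fin n) (Fin n) ℝ) (x : Fin n → ℝ) : Set ℝ :=
  {μ | ∃ u : Fin n → ℝ, u ≠ 0 ∧ x ⬝ᵥ u = 0 ∧ A *ᵥ u = μ • u}

lemma mem_spec_iff' {m : ℕ} (M : Matrix (Fin m) (Fin m) ℝ) (μ : ℝ) :
    μ ∈ spectrum ℝ M ↔ ∃ v : Fin m → ℝ, v ≠ 0 ∧ M.mulVec v = μ • v := by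
  rw [spectrum.mem_iff, Matrix.isUnit_iff_isUnit_det, isUnit_iff_ne_zero, not_not,
    ← Matrix.exists_mulVec_eq_zero_iff]
  have halg : (algebraMap ℝ (Matrix (Fin m) (Fin m) ℝ)) μ = μ • 1 := by
    simp [Algebra.algebraMap_eq_smul_one]
  constructor
  · rintro ⟨v, hv, h⟩
    refine ⟨v, hv, ?_⟩
    rw [halg, Matrix.sub_mulVec, Matrix.smul_mulVec, Matrix.one_mulVec, sub_eq_zero] at h
    exact h.symm
  · rintro ⟨v, hv, h⟩
    refine ⟨v, hv, ?_⟩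
    rw [halg, Matrix.sub_mulVec, Matrix.smul_mulVec, Matrix.one_mulVec, h, sub_self]

lemma inner_mulVec' {n : ℕ} {A : Matrix (Fin n) (Fin n) ℝ} {x : Fin n → ℝ} {t : ℝ}
    (hsym : A.IsSymm) (heig : A *ᵥ x = t • x) (v : Fin n → ℝ) :
    x ⬝ᵥ (A *ᵥ v) = t * (x ⬝ᵥ v) := by
  rw [Matrix.dotProduct_mulVec, ← Matrix.mulVec_transpose, hsym, heig]
  simp [smul_dotProduct]

lemma specA_eq {n : ℕ} {A : Matrix (Fin n) (Fin n) ℝ} {x : Fin n → ℝ} {t : ℝ}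
    (hsym : A.IsSymm) (hx0 : x ≠ 0) (hs : x ⬝ᵥ x ≠ 0) (heig : A *ᵥ x = t • x) :
    spectrum ℝ A = eigS A x ∪ {t} := by
  ext μ
  rw [mem_spec_iff']
  constructor
  · rintro ⟨v, hv, h⟩
    set b : ℝ := (x ⬝ᵥ v) / (x ⬝ᵥ x) with hb
    set u : Fin n → ℝ := v - b • x with hu
    have hxu : x ⬝ᵥ u = 0 := by
      rw [hu, dotProduct_sub, dotProduct_smul, hb, smul_eq_mul]
      rw [div_mul_cancel₀ _ hs, sub_self]
    have hmu : (μ - t) * (x ⬝ᵥ v) = 0 := by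
      have h1 : x ⬝ᵥ (A *ᵥ v) = t * (x ⬝ᵥ v) := inner_mulVec' hsym heig v
      rw [h, dotProduct_smul] at h1
      simp only [smul_eq_mul] at h1
      nlinarith [h1]
    have hAu : A *ᵥ u = μ • u := by
      rw [hu, Matrix.mulVec_sub, Matrix.mulVec_smul, h, heig, smul_sub, smul_smul, smul_smul]
      by_cases hbz : b = 0
      · simp [hbz]
      · have : μ - t = 0 := by
          have hxv : x ⬝ᵥ v = b * (x ⬝ᵥ x) := by rw [hb]; field_simp
          rcases mul_eq_zero.1 hmu with h' | h'
          · exact h'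
          · exfalso; rw [hxv] at h'; rcases mul_eq_zero.1 h' with h'' | h''
            · exact hbz h''
            · exact hs h''
        have : μ = t := by linarith
        rw [this, mul_comm]
    by_cases huz : u = 0
    · right
      have hvbx : v = b • x := by rwa [hu, sub_eq_zero] at huz
      have hbz : b ≠ 0 := by intro hb0; rw [hb0] at hvbx; simp at hvbx; exact hv hvbx
      have : (μ - t) * (b * (x ⬝ᵥ x)) = 0 := by
        rw [← hmu]; congr 1; rw [hvbx, dotProduct_smul]; simp
      rcases mul_eq_zero.1 this with h' | h'
      · simp [show μ = t by linarith]
      · exact absurd h' (mul_ne_zero hbz hs)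
    · left; exact ⟨u, huz, hxu, hAu⟩
  · rintro (⟨u, hu0, _, hAu⟩ | hμ)
    · exact ⟨u, hu0, hAu⟩
    · simp only [Set.mem_singleton_iff] at hμ
      subst hμ; exact ⟨x, hx0, heig⟩

lemma mem_ker_iff' {n : ℕ} (A : Matrix (Fin n) (Fin n) ℝ) (t : ℝ) (u : Fin n → ℝ) :
    u ∈ LinearMap.ker (Matrix.toLin' (A - t • (1 : Matrix (Fin n) (Fin n) ℝ))) ↔
      A *ᵥ u = t • u := by
  rw [LinearMap.mem_ker, Matrix.toLin'_apply, Matrix.sub_mulVec, Matrix.smul_mulVec,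
    Matrix.one_mulVec, sub_eq_zero]

lemma t_not_mem_eigS {n : ℕ} {A : Matrix (Fin n) (Fin n) ℝ} {x : Fin n → ℝ} {t : ℝ}
    (hx0 : x ≠ 0) (hs : x ⬝ᵥ x ≠ 0) (heig : A *ᵥ x = t • x) (hm : eigMult A t = 1) :
    t ∉ eigS A x := by
  rintro ⟨u, hu0, hxu, hAu⟩
  set K := LinearMap.ker (Matrix.toLin' (A - t • (1 : Matrix (Fin n) (Fin n) ℝ))) with hK
  have hxK : x ∈ K := (mem_ker_iff' A t x).2 heig
  have huK : u ∈ K := (mem_ker_iff' A t u).2 hAu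
  have hspan : (Submodule.span ℝ {x}) ≤ K := by
    rw [Submodule.span_le, Set.singleton_subset_iff]; exact hxK
  have heq : Submodule.span ℝ {x} = K := by
    apply Submodule.eq_of_le_of_finrank_le hspan
    rw [finrank_span_singleton hx0]
    have : Module.finrank ℝ K = 1 := hm
    omega
  rw [← heq, Submodule.mem_span_singleton] at huK
  obtain ⟨k, rfl⟩ := huK
  rw [dotProduct_smul, smul_eq_mul] at hxu
  rcases mul_eq_zero.1 hxu with h | h
  · rw [h] at hu0; simp at hu0
  · exact hs h

lemma t_mem_eigS {n : ℕ} {A : Matrix (Fin n) (Fin n) ℝ} {x : Fin n → ℝ} {t : ℝ}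
    (hx0 : x ≠ 0) (hs : x ⬝ᵥ x ≠ 0) (heig : A *ᵥ x = t • x) (hm : eigMult A t ≠ 1) :
    t ∈ eigS A x := by
  set K := LinearMap.ker (Matrix.toLin' (A - t • (1 : Matrix (Fin n) (Fin n) ℝ))) with hK
  have hxK : x ∈ K := (mem_ker_iff' A t x).2 heig
  have hspan : (Submodule.span ℝ {x}) ≤ K := by
    rw [Submodule.span_le, Set.singleton_subset_iff]; exact hxK
  have hne : Submodule.span ℝ {x} ≠ K := by
    intro h
    apply hm
    rw [eigMult, ← hK, ← h, finrank_span_singleton hx0]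
  obtain ⟨u0, hu0K, hu0span⟩ := SetLike.exists_of_lt (lt_of_le_of_ne hspan hne)
  set b : ℝ := (x ⬝ᵥ u0) / (x ⬝ᵥ x) with hb
  refine ⟨u0 - b • x, ?_, ?_, ?_⟩
  · intro h
    apply hu0span
    rw [sub_eq_zero] at h
    rw [h]
    exact Submodule.smul_mem _ _ (Submodule.mem_span_singleton_self x)
  · rw [dotProduct_sub, dotProduct_smul, hb, smul_eq_mul]; rw [div_mul_cancel₀ _ hs, sub_self]
  · have : u0 - b • x ∈ K := K.sub_mem hu0K (K.smul_mem _ hxK)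
    exact (mem_ker_iff' A t _).1 this

def bord {n : ℕ} (c ε : ℝ) (x : Fin n → ℝ) (A : Matrix (Fin n) (Fin n) ℝ) :
    Matrix (Fin (n + 1)) (Fin (n + 1)) ℝ :=
  Matrix.of fun i =>
    Fin.cases (Fin.cons c fun j => ε * x j) (fun i' => Fin.cons (ε * x i') (A i')) i

@[simp] lemma bord_zero_zero {n : ℕ} (c ε : ℝ) (x : Fin n → ℝ) (A : Matrix (Fin n) (Fin n) ℝ) :
    bord c ε x A 0 0 = c := by simp [bord]

@[simp] lemma bord_zero_succ {n : ℕ} (c ε : ℝ) (x : Fin n → ℝ) (A : Matrix (Fin n) (Fin n) ℝ)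
    (j : Fin n) : bord c ε x A 0 j.succ = ε * x j := by simp [bord]

@[simp] lemma bord_succ_zero {n : ℕ} (c ε : ℝ) (x : Fin n → ℝ) (A : Matrix (Fin n) (Fin n) ℝ)
    (i : Fin n) : bord c ε x A i.succ 0 = ε * x i := by simp [bord]

@[simp] lemma bord_succ_succ {n : ℕ} (c ε : ℝ) (x : Fin n → ℝ) (A : Matrix (Fin n) (Fin n) ℝ)
    (i j : Fin n) : bord c ε x A i.succ j.succ = A i j := by simp [bord]

lemma bord_isSymm {n : ℕ} (c ε : ℝ) (x : Fin n → ℝ) {A : Matrix (Fin n) (Fin n) ℝ}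
    (hsym : A.IsSymm) : (bord c ε x A).IsSymm := by
  rw [Matrix.IsSymm]
  ext i j
  rw [Matrix.transpose_apply]
  refine Fin.cases ?_ (fun i' => ?_) i <;> refine Fin.cases ?_ (fun j' => ?_) j <;> simp
  exact hsym.apply i' j'

lemma bord_mulVec_zero {n : ℕ} (c ε : ℝ) (x : Fin n → ℝ) (A : Matrix (Fin n) (Fin n) ℝ)
    (w : Fin (n + 1) → ℝ) :
    (bord c ε x A *ᵥ w) 0 = c * w 0 + ε * (x ⬝ᵥ (w ∘ Fin.succ)) := by
  simp [Matrix.mulVec, dotProduct, Fin.sum_univ_succ, Finset.mul_sum, mul_assoc]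

lemma bord_mulVec_succ {n : ℕ} (c ε : ℝ) (x : Fin n → ℝ) (A : Matrix (Fin n) (Fin n) ℝ)
    (w : Fin (n + 1) → ℝ) (i : Fin n) :
    (bord c ε x A *ᵥ w) i.succ = ε * x i * w 0 + (A *ᵥ (w ∘ Fin.succ)) i := by
  simp [Matrix.mulVec, dotProduct, Fin.sum_univ_succ]

lemma spec_bord {n : ℕ} (hn : 0 < n) {A : Matrix (Fin n) (Fin n) ℝ} {x : Fin n → ℝ} {t : ℝ}
    {c ε : ℝ} (hsym : A.IsSymm) (hx : ∀ i, x i ≠ 0) (hs : 0 < x ⬝ᵥ x)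
    (heig : A *ᵥ x = t • x) (hε : ε ≠ 0) :
    spectrum ℝ (bord c ε x A) =
      eigS A x ∪ {μ | (c - μ) * (t - μ) - ε ^ 2 * (x ⬝ᵥ x) = 0} := by
  set s : ℝ := x ⬝ᵥ x with hsdef
  have hs0 : s ≠ 0 := ne_of_gt hs
  ext μ
  rw [mem_spec_iff']
  constructor
  · rintro ⟨w, hw0, hw⟩
    set a : ℝ := w 0 with ha
    set v : Fin n → ℝ := w ∘ Fin.succ with hv
    have E0 : c * a + ε * (x ⬝ᵥ v) = μ * a := by
      have := congrFun hw 0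
      rwa [bord_mulVec_zero] at this
    have Ei : ∀ i, ε * x i * a + (A *ᵥ v) i = μ * v i := by
      intro i
      have := congrFun hw i.succ
      rwa [bord_mulVec_succ] at this
    set b : ℝ := (x ⬝ᵥ v) / s with hb
    have hxv : x ⬝ᵥ v = b * s := by rw [hb]; field_simp
    set u : Fin n → ℝ := v - b • x with hu
    have hxu : x ⬝ᵥ u = 0 := by
      rw [hu, dotProduct_sub, dotProduct_smul, hxv, smul_eq_mul, ← hsdef]
      ring
    -- dot the succ equations with x
    have hdot : ε * a * s + t * (b * s) = μ * (b * s) := by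
      have h1 : x ⬝ᵥ (fun i => ε * x i * a + (A *ᵥ v) i) = x ⬝ᵥ (fun i => μ * v i) := by
        congr 1; funext i; exact Ei i
      have h2 : x ⬝ᵥ (fun i => ε * x i * a + (A *ᵥ v) i)
          = ε * a * s + t * (x ⬝ᵥ v) := by
        have e1 : x ⬝ᵥ (fun i => ε * x i * a + (A *ᵥ v) i)
            = (ε * a) * (x ⬝ᵥ x) + x ⬝ᵥ (A *ᵥ v) := by
          simp only [dotProduct, Finset.mul_sum, ← Finset.sum_add_distrib]
          apply Finset.sum_congr rfl
          intro i _
          ring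
        rw [e1, inner_mulVec' hsym heig v, ← hsdef]
        try ring
      have h3 : x ⬝ᵥ (fun i => μ * v i) = μ * (x ⬝ᵥ v) := by
        simp only [dotProduct, Finset.mul_sum]
        apply Finset.sum_congr rfl
        intro i _
        ring
      rw [h2, h3, hxv] at h1
      exact h1
    have hab : ε * a + t * b = μ * b := by
      have h' : (ε * a + t * b - μ * b) * s = 0 := by linear_combination hdot
      rcases mul_eq_zero.1 h' with h | h
      · linarith
      · exact absurd h hs0
    have hAu : A *ᵥ u = μ • u := by
      rw [hu, Matrix.mulVec_sub, Matrix.mulVec_smul, heig, smul_smul]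
      funext i
      simp only [Pi.sub_apply, Pi.smul_apply, smul_eq_mul]
      have h4 := Ei i
      linear_combination h4 - x i * hab
    by_cases huz : u = 0
    · right
      have hvb : v = b • x := by rwa [hu, sub_eq_zero] at huz
      have habz : ¬(a = 0 ∧ b = 0) := by
        rintro ⟨haz, hbz⟩
        apply hw0
        funext i
        refine Fin.cases ?_ (fun i' => ?_) i
        · exact haz
        · have : v i' = 0 := by rw [hvb, hbz]; simp
          exact this
      have eq1 : (c - μ) * a + ε * b * s = 0 := by
        linear_combination E0 - ε * hxv
      have eq2 : ε * a + (t - μ) * b = 0 := by linear_combination hab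
      show (c - μ) * (t - μ) - ε ^ 2 * s = 0
      by_cases haz : a = 0
      · have hbz : b ≠ 0 := fun h => habz ⟨haz, h⟩
        have hQb : ((c - μ) * (t - μ) - ε ^ 2 * s) * b = 0 := by
          linear_combination (c - μ) * eq2 - ε * eq1
        exact (mul_eq_zero.1 hQb).resolve_right hbz
      · have hQa : ((c - μ) * (t - μ) - ε ^ 2 * s) * a = 0 := by
          linear_combination (t - μ) * eq1 - ε * s * eq2
        exact (mul_eq_zero.1 hQa).resolve_right haz
    · left
      exact ⟨u, huz, hxu, hAu⟩
  · rintro (⟨u, hu0, hxu, hAu⟩ | hμ)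
    · refine ⟨Fin.cons 0 u, ?_, ?_⟩
      · intro h
        apply hu0
        funext i
        have := congrFun h i.succ
        simpa using this
      · funext i
        refine Fin.cases ?_ (fun i' => ?_) i
        · rw [bord_mulVec_zero]
          have : (Fin.cons (0:ℝ) u : Fin (n+1) → ℝ) ∘ Fin.succ = u := by
            funext j; simp
          rw [this]
          simp [hxu]
        · rw [bord_mulVec_succ]
          have heq : (Fin.cons (0:ℝ) u : Fin (n+1) → ℝ) ∘ Fin.succ = u := by
            funext j; simp
          rw [heq]
          simp only [Fin.cons_zero, mul_zero, zero_add, Pi.smul_apply, Fin.cons_succ,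
            smul_eq_mul]
          have := congrFun hAu i'
          simpa using this
    · simp only [Set.mem_setOf_eq] at hμ
      set a : ℝ := -(t - μ) with ha
      set b : ℝ := ε with hb
      refine ⟨Fin.cons a (b • x), ?_, ?_⟩
      · intro h
        have h0 := congrFun h ((⟨0, hn⟩ : Fin n)).succ
        rw [Fin.cons_succ] at h0
        simp only [Pi.smul_apply, smul_eq_mul, Pi.zero_apply, hb] at h0
        exact mul_ne_zero hε (hx _) h0
      · have hcomp : (Fin.cons a (b • x) : Fin (n+1) → ℝ) ∘ Fin.succ = b • x := by
          funext j; simp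
        funext i
        refine Fin.cases ?_ (fun i' => ?_) i
        · rw [bord_mulVec_zero, hcomp]
          rw [dotProduct_smul]
          simp only [Fin.cons_zero, Pi.smul_apply, smul_eq_mul]
          show c * a + ε * (b * s) = μ * a
          rw [ha, hb]
          linear_combination -hμ
        · rw [bord_mulVec_succ, hcomp, Matrix.mulVec_smul, heig]
          simp only [Fin.cons_zero, Fin.cons_succ, Pi.smul_apply, smul_eq_mul]
          show ε * x i' * a + b * (t * x i') = μ * (b * x i')
          rw [ha, hb]; ring

lemma dotProduct_self_pos' {n : ℕ} (hn : 0 < n) {x : Fin n → ℝ} (hx : ∀ i, x i ≠ 0) :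
    0 < x ⬝ᵥ x := by
  rw [dotProduct]
  exact Finset.sum_pos' (fun i _ => mul_self_nonneg (x i))
    ⟨⟨0, hn⟩, Finset.mem_univ _, mul_self_pos.2 (hx _)⟩

lemma bordering_exists {n : ℕ} (hn : 0 < n) {A : Matrix (Fin n) (Fin n) ℝ}
    {x : Fin n → ℝ} {t : ℝ} (hsym : A.IsSymm) (hx : ∀ i, x i ≠ 0)
    (heig : A *ᵥ x = t • x) (μ1 μ2 : ℝ) (h1 : μ1 < t) (h2 : t < μ2) :
    ∃ A' : Matrix (Fin (n + 1)) (Fin (n + 1)) ℝ, A'.IsSymm ∧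
      (∀ i j : Fin n, A' i.succ j.succ = A i j) ∧
      (∀ i : Fin n, A' 0 i.succ ≠ 0) ∧
      spectrum ℝ A' = eigS A x ∪ {μ1, μ2} := by
  have hs : 0 < x ⬝ᵥ x := dotProduct_self_pos' hn hx
  set s : ℝ := x ⬝ᵥ x with hsdef
  set c : ℝ := μ1 + μ2 - t with hc
  set ε : ℝ := Real.sqrt ((t - μ1) * (μ2 - t) / s) with hεdef
  have hpos : 0 < (t - μ1) * (μ2 - t) / s :=
    div_pos (mul_pos (by linarith) (by linarith)) hs
  have hε : ε ≠ 0 := ne_of_gt (Real.sqrt_pos.2 hpos)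
  have hε2 : ε ^ 2 * s = (t - μ1) * (μ2 - t) := by
    rw [hεdef, Real.sq_sqrt hpos.le]
    field_simp
  refine ⟨bord c ε x A, bord_isSymm c ε x hsym, fun i j => bord_succ_succ c ε x A i j,
    fun i => by rw [bord_zero_succ]; exact mul_ne_zero hε (hx i), ?_⟩
  rw [spec_bord hn hsym hx hs heig hε]
  congr 1
  ext μ
  simp only [Set.mem_setOf_eq, Set.mem_insert_iff, Set.mem_singleton_iff]
  constructor
  · intro h
    have h2' : (μ - μ1) * (μ - μ2) = 0 := by
      linear_combination h + hε2 - (t - μ) * hc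
    rcases mul_eq_zero.1 h2' with h' | h'
    · left; linarith
    · right; linarith
  · rintro (rfl | rfl)
    · linear_combination -hε2 + (t - μ) * hc
    · linear_combination -hε2 + (t - μ) * hc

/-- Let `G` be a non-empty graph and `A ∈ S(G)` with a nowhere-zero eigenvector for an
eigenvalue `t` which is not extreme.  Then there is a `1`-bordering `A'` of `A` lying in
`S(K₁ ∨ G)` (new row nowhere zero off the diagonal, trailing block `A`) with
`q(A') = q(A)`; moreover if `t` is a simple eigenvalue, there is such an `A'` with
`q(A') = q(A) - 1`. -/
theorem stmt18 {n : ℕ} (hn : 0 < n) (G : SimpleGraph (Fin n))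
    (A : Matrix (Fin n) (Fin n) ℝ) (hA : A ∈ matrixSet G)
    (t : ℝ) (x : Fin n → ℝ) (hx : ∀ i, x i ≠ 0) (heig : A.mulVec x = t • x)
    (hlow : ∃ a ∈ spectrum ℝ A, a < t) (hhigh : ∃ b ∈ spectrum ℝ A, t < b) :
    (∃ A' : Matrix (Fin (n + 1)) (Fin (n + 1)) ℝ, A'.IsSymm ∧
      (∀ i j : Fin n, A' i.succ j.succ = A i j) ∧
      (∀ i : Fin n, A' 0 i.succ ≠ 0) ∧
      (spectrum ℝ A').ncard = (spectrum ℝ A).ncard) ∧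
    (eigMult A t = 1 →
      ∃ A' : Matrix (Fin (n + 1)) (Fin (n + 1)) ℝ, A'.IsSymm ∧
        (∀ i j : Fin n, A' i.succ j.succ = A i j) ∧
        (∀ i : Fin n, A' 0 i.succ ≠ 0) ∧
        (spectrum ℝ A').ncard + 1 = (spectrum ℝ A).ncard) := by
  have hsymA : A.IsSymm := hA.1
  have hs : 0 < x ⬝ᵥ x := dotProduct_self_pos' hn hx
  have hs0 : x ⬝ᵥ x ≠ 0 := ne_of_gt hs
  have hx0 : x ≠ 0 := by
    intro h
    exact hx ⟨0, hn⟩ (by rw [h]; rfl)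
  have hspecA : spectrum ℝ A = eigS A x ∪ {t} := specA_eq hsymA hx0 hs0 heig
  obtain ⟨a, haspec, hat⟩ := hlow
  obtain ⟨b, hbspec, htb⟩ := hhigh
  have haS : a ∈ eigS A x := by
    rw [hspecA] at haspec
    rcases haspec with h | h
    · exact h
    · simp only [Set.mem_singleton_iff] at h; exact absurd h (ne_of_lt hat)
  have hbS : b ∈ eigS A x := by
    rw [hspecA] at hbspec
    rcases hbspec with h | h
    · exact h
    · simp only [Set.mem_singleton_iff] at h; exact absurd h (ne_of_gt htb)
  have hSfin : (eigS A x).Finite := by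
    apply (Matrix.finite_spectrum A).subset
    rw [hspecA]
    exact Set.subset_union_left
  constructor
  · by_cases hm : eigMult A t = 1
    · have htS : t ∉ eigS A x := t_not_mem_eigS hx0 hs0 heig hm
      obtain ⟨M, hMt, hMspec⟩ : ∃ M, t < M ∧ M ∉ spectrum ℝ A := by
        have hinf : (Set.Ioi t \ spectrum ℝ A).Infinite :=
          (Set.Ioi_infinite t).diff (Matrix.finite_spectrum A)
        obtain ⟨M, hM⟩ := hinf.nonempty
        exact ⟨M, hM.1, hM.2⟩
      obtain ⟨A', h1, h2, h3, hspec'⟩ := bordering_exists hn hsymA hx heig a M hat hMt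
      refine ⟨A', h1, h2, h3, ?_⟩
      have hMS : M ∉ eigS A x := by
        intro h
        exact hMspec (by rw [hspecA]; exact Or.inl h)
      have e1 : eigS A x ∪ {a, M} = insert M (eigS A x) := by
        ext μ
        simp only [Set.mem_union, Set.mem_insert_iff, Set.mem_singleton_iff]
        constructor
        · rintro (h | rfl | rfl)
          · exact Or.inr h
          · exact Or.inr haS
          · exact Or.inl rfl
        · rintro (rfl | h)
          · exact Or.inr (Or.inr rfl)
          · exact Or.inl h
      have e2 : eigS A x ∪ {t} = insert t (eigS A x) := Set.union_singleton
      rw [hspec', hspecA, e1, e2, Set.ncard_insert_of_notMem hMS hSfin,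
        Set.ncard_insert_of_notMem htS hSfin]
    · have htS : t ∈ eigS A x := t_mem_eigS hx0 hs0 heig hm
      obtain ⟨A', h1, h2, h3, hspec'⟩ := bordering_exists hn hsymA hx heig a b hat htb
      refine ⟨A', h1, h2, h3, ?_⟩
      have e1 : eigS A x ∪ {a, b} = eigS A x ∪ {t} := by
        ext μ
        simp only [Set.mem_union, Set.mem_insert_iff, Set.mem_singleton_iff]
        constructor
        · rintro (h | rfl | rfl)
          · exact Or.inl h
          · exact Or.inl haS
          · exact Or.inl hbS
        · rintro (h | rfl)
          · exact Or.inl h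
          · exact Or.inl htS
      rw [hspec', e1, ← hspecA]
  · intro hm
    have htS : t ∉ eigS A x := t_not_mem_eigS hx0 hs0 heig hm
    obtain ⟨A', h1, h2, h3, hspec'⟩ := bordering_exists hn hsymA hx heig a b hat htb
    refine ⟨A', h1, h2, h3, ?_⟩
    have e1 : eigS A x ∪ {a, b} = eigS A x := by
      ext μ
      simp only [Set.mem_union, Set.mem_insert_iff, Set.mem_singleton_iff]
      constructor
      · rintro (h | rfl | rfl)
        · exact h
        · exact haS
        · exact hbS
      · intro h
        exact Or.inl h
    rw [hspec', hspecA, e1, Set.union_singleton,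
      Set.ncard_insert_of_notMem htS hSfin]
end
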